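/- arXiv:math/0608397 — 3 statements merged into one kernel-verified Lean document; each statement's English description precedes it below -/
import Mathlib

section
/- Let G be a group, let p_1, …, p_{n−1} be positive integers, and let σ_1, …, σ_{n−1} ∈ G satisfy σ_i^{p_i} = 1 for all 1 ≤ i ≤ n−1 and (σ_iσ_{i+1}⋯σ_j)² = 1 for all 1 ≤ i < j ≤ n−1. Define σ_1' := σ_1⁻¹, σ_2' := σ_1²σ_2, and σ_i' := σ_i for 3 ≤ i ≤ n−1. Then (σ_i')^{p_i} = 1 for all 1 ≤ i ≤ n−1 and (σ_i'σ_{i+1}'⋯σ_j')² = 1 for all 1 ≤ i < j ≤ n−1. -/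
private lemma prod_range_head {G : Type*} [Group G] (f : ℕ → G) (i m : ℕ) :
    ((List.range (m+1)).map (fun k => f (i+k))).prod
      = f i * ((List.range m).map (fun k => f (i+1+k))).prod := by
  rw [List.range_succ_eq_map]
  simp only [List.map_cons, List.map_map, List.prod_cons, Function.comp]
  congr 2
  apply List.map_congr_left
  intro k _
  show f (i + (k+1)) = f (i+1+k)
  congr 1
  omega

private lemma aux_sq {G : Type*} [Group G] (a b : G)
    (hA : (a * b) ^ 2 = 1) (hB : b ^ 2 = 1) : (a ^ 2 * b) ^ 2 = 1 := by
  rw [pow_two] at hA hB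
  have hBinv : b⁻¹ = b := by rw [inv_eq_iff_mul_eq_one]; exact hB
  have h1 : a * b * a = b⁻¹ := by
    rw [eq_inv_iff_mul_eq_one]
    calc a * b * a * b = a * b * (a * b) := by group
      _ = 1 := hA
  calc (a ^ 2 * b) ^ 2 = a * (a * b * a) * (a * b) := by rw [pow_two, pow_two]; group
    _ = a * b⁻¹ * (a * b) := by rw [h1]
    _ = a * b * (a * b) := by rw [hBinv]
    _ = 1 := hA

/-- Let `G` be a group, `p 1, …, p (n-1)` positive integers, and
`σ 1, …, σ (n-1) ∈ G` satisfying `σ i ^ p i = 1` for all `1 ≤ i ≤ n-1` and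
`(σ i * σ (i+1) * ⋯ * σ j) ^ 2 = 1` for all `1 ≤ i < j ≤ n-1`. Define
`σ' 1 := (σ 1)⁻¹`, `σ' 2 := σ 1 ^ 2 * σ 2`, and `σ' i := σ i` for `3 ≤ i ≤ n-1`.
Then `(σ' i) ^ p i = 1` for all `1 ≤ i ≤ n-1` and
`(σ' i * σ' (i+1) * ⋯ * σ' j) ^ 2 = 1` for all `1 ≤ i < j ≤ n-1`. -/
theorem new_generators_satisfy_standard_relations {G : Type*} [Group G]
    (n : ℕ) (p : ℕ → ℕ) (hp : ∀ i, 1 ≤ i → i ≤ n - 1 → 0 < p i) (σ σ' : ℕ → G)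
    (hord : ∀ i, 1 ≤ i → i ≤ n - 1 → σ i ^ p i = 1)
    (hrel : ∀ i j : ℕ, 1 ≤ i → i < j → j ≤ n - 1 →
      (((List.range (j - i + 1)).map (fun k => σ (i + k))).prod) ^ 2 = 1)
    (hσ'1 : σ' 1 = (σ 1)⁻¹) (hσ'2 : σ' 2 = σ 1 ^ 2 * σ 2)
    (hσ' : ∀ i, 3 ≤ i → i ≤ n - 1 → σ' i = σ i) :
    (∀ i, 1 ≤ i → i ≤ n - 1 → σ' i ^ p i = 1) ∧
    (∀ i j : ℕ, 1 ≤ i → i < j → j ≤ n - 1 →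
      (((List.range (j - i + 1)).map (fun k => σ' (i + k))).prod) ^ 2 = 1) := by
  -- key consequence of the relation (σ₁σ₂)² = 1, available whenever 2 ≤ n-1
  have key12 : 2 ≤ n - 1 → (σ 1 * σ 2) ^ 2 = 1 := by
    intro h2
    have h := hrel 1 2 le_rfl (by norm_num) h2
    have e : ((List.range (2 - 1 + 1)).map (fun k => σ (1 + k))).prod
        = σ 1 * σ 2 := by
      norm_num [List.range_succ]
    rwa [e] at h
  -- conjugation identity: σ₁²σ₂ = σ₁ σ₂⁻¹ σ₁⁻¹
  have hconj : 2 ≤ n - 1 → σ 1 ^ 2 * σ 2 = σ 1 * (σ 2)⁻¹ * (σ 1)⁻¹ := by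
    intro h2
    have h := key12 h2
    rw [pow_two] at h
    have h1 : σ 1 * σ 2 * σ 1 = (σ 2)⁻¹ := by
      rw [eq_inv_iff_mul_eq_one]
      calc σ 1 * σ 2 * σ 1 * σ 2 = σ 1 * σ 2 * (σ 1 * σ 2) := by group
        _ = 1 := h
    calc σ 1 ^ 2 * σ 2 = σ 1 * (σ 1 * σ 2 * σ 1) * (σ 1)⁻¹ := by rw [pow_two]; group
      _ = σ 1 * (σ 2)⁻¹ * (σ 1)⁻¹ := by rw [h1]
  -- equality of σ' and σ products starting at index ≥ 3
  have tail_eq : ∀ a b : ℕ, 3 ≤ a → a ≤ b → b ≤ n - 1 →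
      ((List.range (b - a + 1)).map (fun k => σ' (a + k))).prod
        = ((List.range (b - a + 1)).map (fun k => σ (a + k))).prod := by
    intro a b ha hab hb
    congr 1
    apply List.map_congr_left
    intro k hk
    rw [List.mem_range] at hk
    exact hσ' (a + k) (by omega) (by omega)
  constructor
  · -- orders of the new generators
    intro i h1 h2
    match i, h2 with
    | 1, h2 =>
      rw [hσ'1, inv_pow, hord 1 le_rfl h2, inv_one]
    | 2, h2 =>
      rw [hσ'2, hconj h2, conj_pow, inv_pow, hord 2 (by norm_num) h2, inv_one,
        mul_one, mul_inv_cancel]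
    | (i+3), h2 =>
      rw [hσ' (i+3) (by omega) h2, hord (i+3) (by omega) h2]
  · -- the standard relations for the new generators
    intro i j h1 hij h2
    match i, hij with
    | 1, hij =>
      match j, h2 with
      | 2, h2 =>
        -- (σ'₁ σ'₂)² = (σ₁ σ₂)² = 1
        have h := key12 h2
        have e : ((List.range (2 - 1 + 1)).map (fun k => σ' (1 + k))).prod
            = σ 1 * σ 2 := by
          norm_num [List.range_succ, hσ'1, hσ'2]
          group
        rw [e]
        exact h
      | (j+3), h2 =>
        -- σ'₁ σ'₂ σ₃ ⋯ σⱼ = σ₁ σ₂ σ₃ ⋯ σⱼ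
        have e1 : (j+3) - 1 + 1 = ((j+3) - 2 + 1) + 1 := by omega
        have e2 : (j+3) - 2 + 1 = ((j+3) - 3 + 1) + 1 := by omega
        rw [e1, prod_range_head σ' 1, e2, prod_range_head σ' 2,
          tail_eq 3 (j+3) le_rfl (by omega) h2, hσ'1, hσ'2]
        have h := hrel 1 (j+3) le_rfl (by omega) h2
        rw [e1, prod_range_head σ 1, e2, prod_range_head σ 2] at h
        calc ((σ 1)⁻¹ * (σ 1 ^ 2 * σ 2 *
              ((List.range ((j+3) - 3 + 1)).map (fun k => σ (3 + k))).prod)) ^ 2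
            = (σ 1 * (σ 2 *
              ((List.range ((j+3) - 3 + 1)).map (fun k => σ (3 + k))).prod)) ^ 2 := by
              group
          _ = 1 := h
    | 2, hij =>
      match j, h2 with
      | (j+3), h2 =>
        have e2 : (j+3) - 2 + 1 = ((j+3) - 3 + 1) + 1 := by omega
        rw [e2, prod_range_head σ' 2, tail_eq 3 (j+3) le_rfl (by omega) h2, hσ'2]
        have hB : (σ 2 * ((List.range ((j+3) - 3 + 1)).map
            (fun k => σ (3 + k))).prod) ^ 2 = 1 := by
          have h := hrel 2 (j+3) (by omega) (by omega) h2
          rwa [e2, prod_range_head σ 2] at h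
        have hA : (σ 1 * (σ 2 * ((List.range ((j+3) - 3 + 1)).map
            (fun k => σ (3 + k))).prod)) ^ 2 = 1 := by
          have h := hrel 1 (j+3) le_rfl (by omega) h2
          have e1 : (j+3) - 1 + 1 = ((j+3) - 2 + 1) + 1 := by omega
          rwa [e1, prod_range_head σ 1, e2, prod_range_head σ 2] at h
        rw [mul_assoc]
        exact aux_sq _ _ hA hB
    | (i+3), hij =>
      rw [tail_eq (i+3) j (by omega) (by omega) h2]
      exact hrel (i+3) j (by omega) hij h2
end

section
/- Let G be a group and let σ_1, σ_2 ∈ G satisfy (σ_1σ_2)² = 1 and ⟨σ_1⟩ ∩ ⟨σ_2⟩ = {1}. Then ⟨σ_1⁻¹⟩ ∩ ⟨σ_1²σ_2⟩ = {1}. -/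
/-- Let `G` be a group and `σ₁, σ₂ ∈ G` satisfy `(σ₁ * σ₂) ^ 2 = 1`
and `⟨σ₁⟩ ∩ ⟨σ₂⟩ = {1}`. Then `⟨σ₁⁻¹⟩ ∩ ⟨σ₁ ^ 2 * σ₂⟩ = {1}`. -/
theorem new_generators_intersection_condition {G : Type*} [Group G] (σ₁ σ₂ : G)
    (h : (σ₁ * σ₂) ^ 2 = 1)
    (hint : Subgroup.zpowers σ₁ ⊓ Subgroup.zpowers σ₂ = ⊥) :
    Subgroup.zpowers σ₁⁻¹ ⊓ Subgroup.zpowers (σ₁ ^ 2 * σ₂) = ⊥ := by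
  have key : σ₁ ^ 2 * σ₂ = σ₁ * σ₂⁻¹ * σ₁⁻¹ := by
    have h2 : σ₁ * σ₂ = σ₂⁻¹ * σ₁⁻¹ := by
      have : (σ₁ * σ₂)⁻¹ = σ₁ * σ₂ := inv_eq_of_mul_eq_one_left (by
        have := h; rwa [sq] at this)
      rw [← this, mul_inv_rev]
    calc σ₁ ^ 2 * σ₂ = σ₁ * (σ₁ * σ₂) := by rw [sq]; group
      _ = σ₁ * (σ₂⁻¹ * σ₁⁻¹) := by rw [h2]
      _ = σ₁ * σ₂⁻¹ * σ₁⁻¹ := by group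
  rw [eq_bot_iff]
  intro x hx
  obtain ⟨⟨m, hm⟩, ⟨n, hn⟩⟩ := hx
  simp only at hm hn
  -- x = (σ₁⁻¹)^m and x = (σ₁σ₂⁻¹σ₁⁻¹)^n
  have hn' : σ₁ * (σ₂⁻¹) ^ n * σ₁⁻¹ = x := by
    rw [← hn, key, conj_zpow]
  have hmem : (σ₂⁻¹) ^ n ∈ Subgroup.zpowers σ₁ ⊓ Subgroup.zpowers σ₂ := by
    constructor
    · have : (σ₂⁻¹) ^ n = σ₁⁻¹ * x * σ₁ := by
        rw [← hn']; group
      rw [this, ← hm]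
      exact ⟨-m, by group⟩
    · exact ⟨-n, by group⟩
  rw [hint] at hmem
  have h1 : (σ₂⁻¹ : G) ^ n = 1 := hmem
  have : x = 1 := by rw [← hn', h1]; group
  simp [this]
end

section
/- Let Γ be a group generated by involutions ρ_0, …, ρ_{n−1} satisfying (ρ_iρ_j)² = 1 for |i − j| ≥ 2 together with the intersection condition ⟨ρ_i : i ∈ I⟩ ∩ ⟨ρ_i : i ∈ J⟩ = ⟨ρ_i : i ∈ I ∩ J⟩ for all subsets I, J of {0, 1, …, n−1} (i.e., Γ is a string C-group). Let Σ be a semisparse subgroup of Γ. Then for every φ ∈ Γ: (i) φ⁻¹Σφ ∩ Γ_0 is a semisparse subgroup of Γ_0 with respect to its generators ρ_1, …, ρ_{n−1}; (ii) φ⁻¹Σφ ∩ Γ_{n−1} is a semisparse subgroup of Γ_{n−1} with respect to its generators ρ_0, …, ρ_{n−2}; and (iii) as sets, φ⁻¹Σφ ∩ (Γ_0 Γ_{n−1}) = (φ⁻¹Σφ ∩ Γ_0)(φ⁻¹Σφ ∩ Γ_{n−1}). -/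
/-!
The heart of the proof is that condition (c), `Γ_{>i} ∩ Γ_{<i+1} S ⊆ S`, passes from `S` to every
conjugate `S^ψ`. This is proved by induction on `ψ` as a word in the generators. Conjugation by
`ρ_t` normalizes both `Γ_{>i}` and `Γ_{<i+1}` unless `t ∈ {i, i+1}`. In the two remaining cases
condition (b) with `(i, k, j) = (i, i+1, i+2)` and the intersection property
`Γ_{>i} ∩ Γ_{<i+2} = ⟨ρ_{i+1}⟩` show that a failure of (c) would put an element of
`Γ_{i+1} ρ_{i+1}` into some conjugate of `S`, which (a) forbids.

Iterating (b) then gives `Γ_{>i} ∩ Γ_{<j} S^ψ ⊆ (Γ_{>i} ∩ Γ_{<j}) S^ψ`. For `i = 0`, `j = n-1`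
this is (iii). It also moves the factor produced by (b) that leaves `Γ_0` (resp. `Γ_{n-1}`) back
inside, which gives (i) and (ii); here elements of `Γ_k` are split as commuting products of
elements of `Γ_{<k}` and `Γ_{>k}`.
-/

open Pointwise

/-- A subgroup `S` of a group `G` is *semisparse* with respect to the generating
family `ρ 0, …, ρ (m-1)` if, writing `Γ = ⟨ρ 0, …, ρ (m-1)⟩`,
`Γ_i = ⟨ρ j : j ≠ i⟩`, `Γ_{<i} = ⟨ρ j : j < i⟩`, `Γ_{>i} = ⟨ρ j : j > i⟩`, and
`S^φ = φ⁻¹ S φ`, the following hold: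
(a) `S^φ ∩ Γ_i ρ_i = ∅` for all `φ ∈ Γ` and `0 ≤ i ≤ m-1`;
(b) `Γ_{>i} ∩ Γ_{<j} S^φ ⊆ Γ_k (Γ_{>i} ∩ Γ_{<j}) S^φ` for all `φ ∈ Γ` and
    `0 ≤ i < k < j ≤ m-1`;
(c) `Γ_{>i} ∩ Γ_{<i+1} S ⊆ S` for all `0 ≤ i < m-1`. -/
def IsSemisparse {G : Type*} [Group G] (m : ℕ) (ρ : ℕ → G) (S : Subgroup G) : Prop :=
  (∀ φ ∈ Subgroup.closure (ρ '' Set.Iio m), ∀ i < m,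
      ((fun x => φ⁻¹ * x * φ) '' (S : Set G)) ∩
        ((Subgroup.closure (ρ '' {l | l < m ∧ l ≠ i}) : Set G) * {ρ i}) = ∅) ∧
  (∀ φ ∈ Subgroup.closure (ρ '' Set.Iio m), ∀ i k j : ℕ, i < k → k < j → j ≤ m - 1 →
      ((Subgroup.closure (ρ '' {l | i < l ∧ l < m}) : Set G) ∩
          ((Subgroup.closure (ρ '' {l | l < j}) : Set G) *
            ((fun x => φ⁻¹ * x * φ) '' (S : Set G)))) ⊆
        (Subgroup.closure (ρ '' {l | l < m ∧ l ≠ k}) : Set G) *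
          ((Subgroup.closure (ρ '' {l | i < l ∧ l < m}) : Set G) ∩
            (Subgroup.closure (ρ '' {l | l < j}) : Set G)) *
          ((fun x => φ⁻¹ * x * φ) '' (S : Set G))) ∧
  (∀ i : ℕ, i < m - 1 →
      ((Subgroup.closure (ρ '' {l | i < l ∧ l < m}) : Set G) ∩
          ((Subgroup.closure (ρ '' {l | l < i + 1}) : Set G) * (S : Set G))) ⊆
        (S : Set G))

open Set

section

variable {G : Type*} [Group G]

namespace Subgroup

/-- `S.conj ψ` is the paper's `S^ψ = ψ⁻¹ S ψ`. -/
def conj (S : Subgroup G) (ψ : G) : Subgroup G := S.map (MulAut.conj ψ⁻¹).toMonoidHom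

variable {S H : Subgroup G} {ψ x : G}

theorem mem_conj : x ∈ S.conj ψ ↔ ψ * x * ψ⁻¹ ∈ S := by
  rw [conj, mem_map_equiv, MulAut.conj_symm_apply, inv_inv]

theorem coe_conj (S : Subgroup G) (ψ : G) :
    (S.conj ψ : Set G) = (fun x => ψ⁻¹ * x * ψ) '' S := by
  ext x
  exact ⟨fun hx => ⟨_, mem_conj.1 hx, by group⟩,
    by rintro ⟨s, hs, rfl⟩; rw [SetLike.mem_coe, mem_conj]; group; exact hs⟩

@[simp] theorem conj_one (S : Subgroup G) : S.conj 1 = S := by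
  ext x; simp [mem_conj]

theorem conj_mul (S : Subgroup G) (ψ g : G) : S.conj (ψ * g) = (S.conj ψ).conj g := by
  ext x; simp only [mem_conj, mul_inv_rev, mul_assoc]

theorem conj_mono {T : Subgroup G} (h : S ≤ T) : S.conj ψ ≤ T.conj ψ := map_mono h

theorem conj_inf_of_mem (hψ : ψ ∈ H) : (S ⊓ H).conj ψ = S.conj ψ ⊓ H := by
  ext x
  simp only [mem_inf, mem_conj, ← mem_normalizer_iff.1 (le_normalizer hψ)]

end Subgroup

/-- `Γlt ρ j`, `Γgt n ρ i` and `Γne n ρ k` are the paper's `Γ_{<j}`, `Γ_{>i}` and `Γ_k` for the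
generators `ρ 0, …, ρ (n-1)`. -/
def Γlt (ρ : ℕ → G) (j : ℕ) : Subgroup G := Subgroup.closure (ρ '' {l | l < j})

def Γgt (n : ℕ) (ρ : ℕ → G) (i : ℕ) : Subgroup G := Subgroup.closure (ρ '' {l | i < l ∧ l < n})

def Γne (n : ℕ) (ρ : ℕ → G) (k : ℕ) : Subgroup G := Subgroup.closure (ρ '' {l | l < n ∧ l ≠ k})

/-- `B ∩ A T ⊆ T`, the shape of condition (c). -/
def IsCutClosed (A B T : Subgroup G) : Prop := ∀ x ∈ B, ∀ β ∈ A, β⁻¹ * x ∈ T → x ∈ T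

def IsCutStable (n : ℕ) (ρ : ℕ → G) (T : Subgroup G) : Prop :=
  ∀ i, i + 1 < n → IsCutClosed (Γlt ρ (i + 1)) (Γgt n ρ i) T

theorem IsCutClosed.conj {A B T : Subgroup G} {g : G} (h : IsCutClosed A B T)
    (hA : g ∈ Subgroup.normalizer (A : Set G)) (hB : g ∈ Subgroup.normalizer (B : Set G)) :
    IsCutClosed A B (T.conj g) := by
  intro x hx β hβ hs
  rw [Subgroup.mem_conj] at hs ⊢
  refine h _ ((Subgroup.mem_normalizer_iff.1 hB x).1 hx) _
    ((Subgroup.mem_normalizer_iff.1 hA β).1 hβ) ?_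
  rwa [show (g * β * g⁻¹)⁻¹ * (g * x * g⁻¹) = g * (β⁻¹ * x) * g⁻¹ by group]

theorem isSemisparse_iff {m : ℕ} {ρ : ℕ → G} {T : Subgroup G} :
    IsSemisparse m ρ T ↔
      (∀ φ ∈ Subgroup.closure (ρ '' Iio m), ∀ i < m, ∀ w ∈ Γne m ρ i, w * ρ i ∉ T.conj φ) ∧
      (∀ φ ∈ Subgroup.closure (ρ '' Iio m), ∀ i k j, i < k → k < j → j < m →
        ∀ x ∈ Γgt m ρ i, ∀ β ∈ Γlt ρ j, β⁻¹ * x ∈ T.conj φ →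
          ∃ α ∈ Γne m ρ k, ∃ δ ∈ Γgt m ρ i ⊓ Γlt ρ j, ∃ τ ∈ T.conj φ, x = α * δ * τ) ∧
      IsCutStable m ρ T := by
  simp only [IsSemisparse, ← Subgroup.coe_conj]
  refine and_congr (forall₂_congr fun φ _ => forall₂_congr fun i _ => ?_)
    (and_congr (forall₂_congr fun φ _ => ?_) (forall_congr' fun i => ?_))
  · simp only [eq_empty_iff_forall_notMem, mem_inter_iff, mem_mul, mem_singleton_iff]
    exact ⟨fun h w hw hs => h _ ⟨hs, w, hw, _, rfl, rfl⟩,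
      by rintro h _ ⟨hs, w, hw, _, rfl, rfl⟩; exact h w hw hs⟩
  · constructor
    · intro h i k j hik hkj hj x hx β hβ hs
      obtain ⟨_, ⟨α, hα, δ, hδ, rfl⟩, τ, hτ, rfl⟩ :=
        h i k j hik hkj (by omega) ⟨hx, β, hβ, β⁻¹ * x, hs, by group⟩
      exact ⟨α, hα, δ, hδ, τ, hτ, rfl⟩
    · rintro h i k j hik hkj hj _ ⟨hx, β, hβ, s, hs, rfl⟩
      obtain ⟨α, hα, δ, hδ, τ, hτ, hx'⟩ :=
        h i k j hik hkj (by omega) _ hx β hβ (by rwa [inv_mul_cancel_left])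
      exact ⟨_, ⟨α, hα, δ, hδ, rfl⟩, τ, hτ, hx'.symm⟩
  · refine imp_congr (by omega) ⟨fun h x hx β hβ hs => h ⟨hx, β, hβ, β⁻¹ * x, hs, by group⟩, ?_⟩
    rintro h _ ⟨hx, β, hβ, s, hs, rfl⟩
    exact h _ hx β hβ (by rwa [inv_mul_cancel_left])

section Generators

variable {n : ℕ} {ρ : ℕ → G} {i j k t : ℕ} {x : G}

theorem rho_mem_Γlt (h : t < j) : ρ t ∈ Γlt ρ j := Subgroup.subset_closure ⟨t, h, rfl⟩

theorem rho_mem_Γgt (h : i < t) (ht : t < n) : ρ t ∈ Γgt n ρ i :=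
  Subgroup.subset_closure ⟨t, ⟨h, ht⟩, rfl⟩

theorem Γlt_mono {j' : ℕ} (h : j ≤ j') : Γlt ρ j ≤ Γlt ρ j' :=
  Subgroup.closure_mono (image_mono fun _ hl => lt_of_lt_of_le hl h)

theorem Γgt_anti {i' : ℕ} (h : i ≤ i') : Γgt n ρ i' ≤ Γgt n ρ i :=
  Subgroup.closure_mono (image_mono fun _ hl => ⟨lt_of_le_of_lt h hl.1, hl.2⟩)

theorem Γne_mono {n' : ℕ} (h : n ≤ n') : Γne n ρ k ≤ Γne n' ρ k :=
  Subgroup.closure_mono (image_mono fun _ hl => ⟨lt_of_lt_of_le hl.1 h, hl.2⟩)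

theorem Γgt_le_Γne (h : k ≤ i) : Γgt n ρ i ≤ Γne n ρ k :=
  Subgroup.closure_mono (image_mono fun _ hl => ⟨hl.2, by have := hl.1; omega⟩)

theorem Γlt_le_Γne (h : j ≤ k) (hn : j ≤ n) : Γlt ρ j ≤ Γne n ρ k :=
  Subgroup.closure_mono (image_mono fun l (hl : l < j) => ⟨by omega, by omega⟩)

theorem Γgt_le_Γlt : Γgt n ρ i ≤ Γlt ρ n :=
  Subgroup.closure_mono (image_mono fun _ hl => hl.2)

theorem Γgt_eq_bot (h : n ≤ i + 1) : Γgt n ρ i = ⊥ := by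
  rw [Γgt, eq_bot_iff, Subgroup.closure_le]
  rintro _ ⟨l, hl, rfl⟩
  exact absurd hl.2 (by have := hl.1; omega)

theorem Γne_zero : Γne n ρ 0 = Γgt n ρ 0 := by
  rw [Γne, Γgt]
  congr 2
  ext l
  simp only [mem_ofPred_eq]
  omega

theorem Γne_sub_one : Γne n ρ (n - 1) = Γlt ρ (n - 1) := by
  rw [Γne, Γlt]
  congr 2
  ext l
  simp only [mem_ofPred_eq]
  omega

theorem Γne_eq_sup (hk : k ≤ n) : Γne n ρ k = Γlt ρ k ⊔ Γgt n ρ k := by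
  rw [Γne, Γlt, Γgt, ← Subgroup.closure_union, ← image_union]
  congr 2
  ext l
  simp only [mem_ofPred_eq, mem_union]
  omega

variable (hinv : ∀ i < n, ρ i ^ 2 = 1)
include hinv

theorem inv_rho (ht : t < n) : (ρ t)⁻¹ = ρ t :=
  inv_eq_of_mul_eq_one_right (by rw [← pow_two, hinv t ht])

theorem eq_one_or_eq_rho_of_mem_closure {s : Set ℕ} (ht : t < n) (hs : ∀ l ∈ s, l = t)
    (hx : x ∈ Subgroup.closure (ρ '' s)) : x = 1 ∨ x = ρ t := by
  have hle : Subgroup.closure (ρ '' s) ≤ Subgroup.closure {ρ t} :=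
    Subgroup.closure_mono (by rintro _ ⟨l, hl, rfl⟩; rw [hs l hl]; rfl)
  obtain ⟨m, rfl⟩ := Subgroup.mem_closure_singleton.1 (hle hx)
  rw [zpow_eq_zpow_emod' m (hinv t ht)]
  rcases Int.emod_two_eq_zero_or_one m with h | h <;> simp [h]

variable (hcomm : ∀ i < n, ∀ j < n, (i + 2 ≤ j ∨ j + 2 ≤ i) → (ρ i * ρ j) ^ 2 = 1)
include hcomm

theorem commute_rho (hi : i < n) (hj : j < n) (h : i + 2 ≤ j ∨ j + 2 ≤ i) :
    Commute (ρ i) (ρ j) := by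
  have hij : ρ i * ρ j = (ρ i * ρ j)⁻¹ :=
    eq_inv_of_mul_eq_one_left (by rw [← pow_two, hcomm i hi j hj h])
  rw [Commute, SemiconjBy, hij, mul_inv_rev, inv_rho hinv hi, inv_rho hinv hj]

theorem rho_mem_centralizer_closure {s : Set ℕ} (ht : t < n)
    (hs : ∀ l ∈ s, l < n ∧ (t + 2 ≤ l ∨ l + 2 ≤ t)) :
    ρ t ∈ Subgroup.centralizer (Subgroup.closure (ρ '' s) : Set G) := by
  rw [Subgroup.centralizer_closure, Subgroup.mem_centralizer_iff]
  rintro _ ⟨l, hl, rfl⟩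
  exact (commute_rho hinv hcomm (hs l hl).1 ht (hs l hl).2.symm).eq

theorem rho_mem_normalizer_Γgt (ht : t < n) (hti : t ≠ i) :
    ρ t ∈ Subgroup.normalizer (Γgt n ρ i : Set G) := by
  rcases lt_or_gt_of_ne hti with h | h
  · exact Subgroup.centralizer_le_normalizer _
      (rho_mem_centralizer_closure hinv hcomm ht fun l hl => ⟨hl.2, by have := hl.1; omega⟩)
  · exact Subgroup.le_normalizer (rho_mem_Γgt h ht)

theorem rho_mem_normalizer_Γlt (ht : t < n) (htj : t ≠ j) :
    ρ t ∈ Subgroup.normalizer (Γlt ρ j : Set G) := by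
  rcases lt_or_gt_of_ne htj with h | h
  · exact Subgroup.le_normalizer (rho_mem_Γlt h)
  · exact Subgroup.centralizer_le_normalizer _
      (rho_mem_centralizer_closure hinv hcomm ht fun l (hl : l < j) => ⟨by omega, by omega⟩)

theorem exists_mul_of_mem_Γne (hk : k ≤ n) (hx : x ∈ Γne n ρ k) :
    ∃ a ∈ Γlt ρ k, ∃ b ∈ Γgt n ρ k, x = a * b ∧ x = b * a := by
  have hcen : Γlt ρ k ≤ Subgroup.centralizer (Γgt n ρ k : Set G) :=
    (Subgroup.closure_le _).2 fun _ ⟨t, (ht : t < k), h⟩ => h ▸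
      rho_mem_centralizer_closure hinv hcomm (by omega) fun l hl => ⟨hl.2, by have := hl.1; omega⟩
  rw [Γne_eq_sup hk, ← SetLike.mem_coe, Subgroup.coe_mul_of_left_le_normalizer_right _ _
    (hcen.trans (Subgroup.centralizer_le_normalizer _))] at hx
  obtain ⟨a, ha, b, hb, rfl⟩ := hx
  exact ⟨a, ha, b, hb, rfl, (Subgroup.mem_centralizer_iff.1 (hcen ha) b hb).symm⟩

end Generators

section Shift

variable {n : ℕ} {ρ : ℕ → G} {i j : ℕ}

theorem closure_image_succ {s t : Set ℕ} (h : ∀ l, l ∈ t ↔ 0 < l ∧ l - 1 ∈ s) :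
    Subgroup.closure ((fun l => ρ (l + 1)) '' s) = Subgroup.closure (ρ '' t) := by
  congr 1
  ext g
  constructor
  · rintro ⟨l, hl, rfl⟩
    exact ⟨l + 1, (h _).2 ⟨l.succ_pos, hl⟩, rfl⟩
  · rintro ⟨l, hl, rfl⟩
    obtain ⟨hl0, hl'⟩ := (h l).1 hl
    exact ⟨l - 1, hl', by simp only [Nat.sub_add_cancel hl0]⟩

theorem closure_image_succ_Iio :
    Subgroup.closure ((fun l => ρ (l + 1)) '' Iio (n - 1)) = Γgt n ρ 0 :=
  closure_image_succ fun l => by simp only [mem_ofPred_eq, mem_Iio]; omega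

theorem Γlt_shift : Γlt (fun l => ρ (l + 1)) j = Γgt (j + 1) ρ 0 :=
  closure_image_succ fun l => by simp only [mem_ofPred_eq]; omega

theorem Γgt_shift : Γgt (n - 1) (fun l => ρ (l + 1)) i = Γgt n ρ (i + 1) :=
  closure_image_succ fun l => by simp only [mem_ofPred_eq]; omega

end Shift

structure IsStringCGroup (n : ℕ) (ρ : ℕ → G) : Prop where
  closure_eq_top : Subgroup.closure (ρ '' Iio n) = ⊤
  sq_eq_one : ∀ i < n, ρ i ^ 2 = 1
  mul_sq_eq_one : ∀ i < n, ∀ j < n, (i + 2 ≤ j ∨ j + 2 ≤ i) → (ρ i * ρ j) ^ 2 = 1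
  closure_inf_closure : ∀ I J : Set ℕ, I ⊆ Iio n → J ⊆ Iio n →
    Subgroup.closure (ρ '' I) ⊓ Subgroup.closure (ρ '' J) = Subgroup.closure (ρ '' (I ∩ J))

namespace IsStringCGroup

variable {n : ℕ} {ρ : ℕ → G} (hΓ : IsStringCGroup n ρ) {i j k : ℕ}
include hΓ

theorem Γgt_inf_Γlt (hj : j ≤ n) : Γgt n ρ i ⊓ Γlt ρ j = Γgt j ρ i := by
  rw [Γgt, Γlt, hΓ.closure_inf_closure {l | i < l ∧ l < n} {l | l < j} (fun _ hl => hl.2)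
    fun l (hl : l < j) => show l < n by omega, Γgt]
  congr 2
  ext l
  simp only [mem_inter_iff, mem_ofPred_eq]
  omega

theorem Γne_shift : Γne (n - 1) (fun l => ρ (l + 1)) k = Γgt n ρ 0 ⊓ Γne n ρ (k + 1) := by
  rw [Γgt, Γne, Γne, hΓ.closure_inf_closure _ _ (fun _ hl => hl.2) fun _ hl => hl.1]
  exact closure_image_succ fun l => by simp only [mem_inter_iff, mem_ofPred_eq]; omega

end IsStringCGroup

namespace IsSemisparse

variable {n : ℕ} {ρ : ℕ → G} {S : Subgroup G} (hS : IsSemisparse n ρ S) {i j k t : ℕ}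
  {x β : G}
include hS

theorem conj_mul_rho_notMem (hgen : Subgroup.closure (ρ '' Iio n) = ⊤) (ht : t < n) {w : G}
    (hw : w ∈ Γne n ρ t) (g χ : G) : g * (w * ρ t) * g⁻¹ ∉ S.conj χ := by
  rw [← Subgroup.mem_conj, ← Subgroup.conj_mul]
  exact (isSemisparse_iff.1 hS).1 _ (hgen ▸ Subgroup.mem_top _) t ht w hw

theorem exists_eq_mul_mul (hgen : Subgroup.closure (ρ '' Iio n) = ⊤) (χ : G) (hik : i < k)
    (hkj : k < j) (hj : j < n) (hx : x ∈ Γgt n ρ i) (hβ : β ∈ Γlt ρ j)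
    (hs : β⁻¹ * x ∈ S.conj χ) :
    ∃ α ∈ Γne n ρ k, ∃ δ ∈ Γgt n ρ i ⊓ Γlt ρ j, ∃ τ ∈ S.conj χ, x = α * δ * τ :=
  (isSemisparse_iff.1 hS).2.1 _ (hgen ▸ Subgroup.mem_top _) i k j hik hkj hj x hx β hβ hs

theorem isCutClosed_zero (hgen : Subgroup.closure (ρ '' Iio n) = ⊤)
    (hinv : ∀ i < n, ρ i ^ 2 = 1) (hn : 0 < n) (χ : G) :
    IsCutClosed (Γlt ρ 1) (Γgt n ρ 0) (S.conj χ) := by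
  intro x hx β hβ hs
  rcases eq_one_or_eq_rho_of_mem_closure hinv hn (fun l (hl : l < 1) => by omega) hβ
    with rfl | rfl
  · simpa using hs
  · refine absurd (inv_mem hs) ?_
    simpa using hS.conj_mul_rho_notMem hgen hn (Γgt_le_Γne le_rfl (inv_mem hx)) 1 χ

variable (hΓ : IsStringCGroup n ρ)
include hΓ

theorem mem_or_eq_mul_rho_mul {ψ z : G} (hψ : IsCutStable n ρ (S.conj ψ)) (hi : i + 1 < n)
    (hz : z ∈ Γgt n ρ i) (hβ : β ∈ Γlt ρ (i + 2)) (hs : β⁻¹ * z ∈ S.conj ψ) :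
    z ∈ S.conj ψ ∨ ∃ α ∈ Γne n ρ (i + 1), ∃ τ ∈ S.conj ψ, z = α * ρ (i + 1) * τ := by
  rcases Nat.lt_or_ge (i + 2) n with hn | hn
  · obtain ⟨α, hα, δ, hδ, τ, hτ, rfl⟩ := hS.exists_eq_mul_mul hΓ.closure_eq_top ψ
      (j := i + 2) (lt_add_one i) (lt_add_one _) hn hz hβ hs
    rw [hΓ.Γgt_inf_Γlt hn.le] at hδ
    rcases eq_one_or_eq_rho_of_mem_closure hΓ.sq_eq_one hi
      (fun l (hl : i < l ∧ l < i + 2) => by omega) hδ with rfl | rfl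
    · obtain ⟨a, ha, b, hb, -, rfl⟩ :=
        exists_mul_of_mem_Γne hΓ.sq_eq_one hΓ.mul_sq_eq_one hi.le hα
      have hbz : b⁻¹ * (b * a * 1 * τ) ∈ S.conj ψ :=
        hψ i hi _ (mul_mem (inv_mem (Γgt_anti (Nat.le_succ i) hb)) hz) a ha (by
          rwa [show a⁻¹ * (b⁻¹ * (b * a * 1 * τ)) = τ by group])
      have hbS : b ∈ S.conj ψ := hψ (i + 1) hn b hb β hβ (by
        simpa [mul_assoc] using mul_mem hs (inv_mem hbz))
      exact Or.inl (by simpa using mul_mem hbS hbz)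
    · exact Or.inr ⟨α, hα, τ, hτ, rfl⟩
  · rcases eq_one_or_eq_rho_of_mem_closure hΓ.sq_eq_one hi
      (fun l (hl : i < l ∧ l < n) => by omega) hz with rfl | rfl
    · exact Or.inl (one_mem _)
    · exact Or.inr ⟨1, one_mem _, 1, one_mem _, by simp⟩

theorem isCutClosed_conj_mul_rho_succ {ψ : G} (hψ : IsCutStable n ρ (S.conj ψ))
    (hi : i + 1 < n) : IsCutClosed (Γlt ρ (i + 1)) (Γgt n ρ i) (S.conj (ψ * ρ (i + 1))) := by
  intro x hx β hβ hs
  set r := ρ (i + 1)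
  have hr : r⁻¹ = r := inv_rho hΓ.sq_eq_one hi
  have hrgt : r ∈ Γgt n ρ i := rho_mem_Γgt (lt_add_one i) hi
  have hrlt : r ∈ Γlt ρ (i + 2) := rho_mem_Γlt (lt_add_one _)
  rw [Subgroup.conj_mul, Subgroup.mem_conj] at hs ⊢
  have hs' : (r * β * r⁻¹)⁻¹ * (r * x * r⁻¹) ∈ S.conj ψ := by
    rwa [show (r * β * r⁻¹)⁻¹ * (r * x * r⁻¹) = r * (β⁻¹ * x) * r⁻¹ by group]
  obtain h | ⟨α, hα, τ, hτ, hz⟩ := hS.mem_or_eq_mul_rho_mul hΓ hψ hi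
    (mul_mem (mul_mem hrgt hx) (inv_mem hrgt))
    (mul_mem (mul_mem hrlt (Γlt_mono (Nat.le_succ _) hβ)) (inv_mem hrlt)) hs'
  · exact h
  refine absurd (mul_mem hs' (inv_mem hτ)) ?_
  have e : r * β⁻¹ * r⁻¹ * α * r = (r * α⁻¹) * (α * β⁻¹ * r) * (r * α⁻¹)⁻¹ := by
    simp only [mul_inv_rev, inv_inv, hr]; group
  rw [hz, show (r * β * r⁻¹)⁻¹ * (α * r * τ) * τ⁻¹ = r * β⁻¹ * r⁻¹ * α * r by group, e]
  exact hS.conj_mul_rho_notMem hΓ.closure_eq_top hi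
    (mul_mem hα (inv_mem (Γlt_le_Γne le_rfl hi.le hβ))) _ ψ

theorem isCutClosed_succ_conj_mul_rho_succ {ψ : G} (hψ : IsCutStable n ρ (S.conj ψ))
    (hi : i + 2 < n) :
    IsCutClosed (Γlt ρ (i + 2)) (Γgt n ρ (i + 1)) (S.conj (ψ * ρ (i + 1))) := by
  intro x hx β hβ hs
  set r := ρ (i + 1)
  have hrgt : r ∈ Γgt n ρ i := rho_mem_Γgt (lt_add_one i) (by omega)
  have hrlt : r ∈ Γlt ρ (i + 2) := rho_mem_Γlt (lt_add_one _)
  have hx' : x ∈ Γgt n ρ i := Γgt_anti (Nat.le_succ i) hx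
  rw [Subgroup.conj_mul, Subgroup.mem_conj] at hs ⊢
  obtain h | ⟨α, hα, τ, hτ, hz⟩ := hS.mem_or_eq_mul_rho_mul hΓ hψ (by omega)
    (mul_mem (mul_mem hrgt hx') (inv_mem hrgt)) (mul_mem (mul_mem hrlt hβ) (inv_mem hrlt))
    (by rwa [show (r * β * r⁻¹)⁻¹ * (r * x * r⁻¹) = r * (β⁻¹ * x) * r⁻¹ by group])
  · exact h
  exfalso
  obtain ⟨a, ha, b, hb, -, rfl⟩ :=
    exists_mul_of_mem_Γne hΓ.sq_eq_one hΓ.mul_sq_eq_one (by omega) hα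
  -- `b⁻¹ r x = a (r τ r)` lies in `S^{ψ r}` by the case already done, but it is conjugate
  -- to `(x b⁻¹) ρ_{i+1}` with `x b⁻¹ ∈ Γ_{i+1}`.
  have hw : b⁻¹ * r * x ∈ S.conj (ψ * r) := by
    refine hS.isCutClosed_conj_mul_rho_succ hΓ hψ (by omega) _
      (mul_mem (mul_mem (inv_mem (Γgt_anti (Nat.le_succ i) hb)) hrgt) hx') a ha ?_
    rw [Subgroup.conj_mul, Subgroup.mem_conj,
      show r * (a⁻¹ * (b⁻¹ * r * x)) * r⁻¹ = r * (a⁻¹ * b⁻¹ * (r * x * r⁻¹)) by group, hz,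
      show r * (a⁻¹ * b⁻¹ * (b * a * r * τ)) = r * r * τ by group, ← pow_two,
      hΓ.sq_eq_one _ (by omega), one_mul]
    exact hτ
  refine hS.conj_mul_rho_notMem hΓ.closure_eq_top (by omega)
    (mul_mem (Γgt_le_Γne le_rfl hx) (inv_mem (Γgt_le_Γne le_rfl hb))) x⁻¹ (ψ * r) ?_
  rwa [show x⁻¹ * (x * b⁻¹ * r) * x⁻¹⁻¹ = b⁻¹ * r * x by group]

theorem isCutStable_conj_mul_rho {ψ : G} (hψ : IsCutStable n ρ (S.conj ψ)) (ht : t < n) :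
    IsCutStable n ρ (S.conj (ψ * ρ t)) := by
  intro i hi
  obtain rfl | rfl | ⟨hti, hti'⟩ : t = i + 1 ∨ t = i ∨ t ≠ i ∧ t ≠ i + 1 := by omega
  · exact hS.isCutClosed_conj_mul_rho_succ hΓ hψ hi
  · rcases t with _ | i
    · exact hS.isCutClosed_zero hΓ.closure_eq_top hΓ.sq_eq_one ht _
    · exact hS.isCutClosed_succ_conj_mul_rho_succ hΓ hψ hi
  · rw [Subgroup.conj_mul]
    exact (hψ i hi).conj (rho_mem_normalizer_Γlt hΓ.sq_eq_one hΓ.mul_sq_eq_one ht hti')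
      (rho_mem_normalizer_Γgt hΓ.sq_eq_one hΓ.mul_sq_eq_one ht hti)

theorem isCutStable_conj (ψ : G) : IsCutStable n ρ (S.conj ψ) := by
  have hψ : ψ ∈ Subgroup.closure (ρ '' Iio n) := hΓ.closure_eq_top ▸ Subgroup.mem_top ψ
  induction hψ using Subgroup.closure_induction_right with
  | one => simpa using (isSemisparse_iff.1 hS).2.2
  | mul_right ψ _ _ ht h =>
    obtain ⟨t, ht, rfl⟩ := ht
    exact hS.isCutStable_conj_mul_rho hΓ h ht
  | mul_inv_cancel ψ _ _ ht h =>
    obtain ⟨t, ht, rfl⟩ := ht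
    rw [inv_rho hΓ.sq_eq_one ht]
    exact hS.isCutStable_conj_mul_rho hΓ h ht

theorem exists_mem_inf_inv_mul_mem (ψ : G) (hij : i < j) (hj : j < n) (hx : x ∈ Γgt n ρ i)
    (hβ : β ∈ Γlt ρ j) (hs : β⁻¹ * x ∈ S.conj ψ) :
    ∃ μ ∈ Γgt n ρ i ⊓ Γlt ρ j, μ⁻¹ * x ∈ S.conj ψ := by
  obtain ⟨d, hd⟩ := Nat.exists_eq_add_of_lt hij
  induction d generalizing i ψ x β with
  | zero =>
    subst hd
    exact ⟨1, one_mem _, by simpa using hS.isCutStable_conj hΓ ψ i hj x hx β hβ hs⟩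
  | succ d ih =>
    obtain ⟨α, hα, δ, ⟨hδi, hδj⟩, τ, hτ, rfl⟩ := hS.exists_eq_mul_mul hΓ.closure_eq_top ψ
      (k := i + 1) (lt_add_one i) (by omega) hj hx hβ hs
    obtain ⟨a, ha, b, hb, rfl, hba⟩ :=
      exists_mul_of_mem_Γne hΓ.sq_eq_one hΓ.mul_sq_eq_one (by omega) hα
    have hu : b⁻¹ * (a * b * δ * τ) * δ⁻¹ ∈ S.conj (ψ * δ⁻¹) := by
      refine hS.isCutStable_conj hΓ _ i (by omega) _ (mul_mem (mul_mem
        (inv_mem (Γgt_anti (Nat.le_succ i) hb)) hx) (inv_mem hδi)) a ha ?_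
      rwa [Subgroup.conj_mul, Subgroup.mem_conj, inv_inv, hba,
        show δ⁻¹ * (a⁻¹ * (b⁻¹ * (b * a * δ * τ) * δ⁻¹)) * δ = τ by group]
    have hs' : (a⁻¹ * β * δ⁻¹)⁻¹ * b ∈ S.conj (ψ * δ⁻¹) := by
      rw [Subgroup.conj_mul, Subgroup.mem_conj, inv_inv,
        show δ⁻¹ * ((a⁻¹ * β * δ⁻¹)⁻¹ * b) * δ = β⁻¹ * (a * b * δ * τ) * τ⁻¹ by group]
      exact mul_mem hs (inv_mem hτ)
    obtain ⟨ν, ⟨hνi, hνj⟩, hν⟩ := ih (ψ * δ⁻¹) (i := i + 1) (by omega) hb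
      (mul_mem (mul_mem (inv_mem (Γlt_mono (by omega) ha)) hβ) (inv_mem hδj)) hs' (by omega)
    refine ⟨ν * δ, ⟨mul_mem (Γgt_anti (Nat.le_succ i) hνi) hδi, mul_mem hνj hδj⟩, ?_⟩
    rw [Subgroup.conj_mul, Subgroup.mem_conj, inv_inv] at hu hν
    simpa only [show δ⁻¹ * (ν⁻¹ * b) * δ * (δ⁻¹ * (b⁻¹ * (a * b * δ * τ) * δ⁻¹) * δ) =
      (ν * δ)⁻¹ * (a * b * δ * τ) by group] using mul_mem hν hu

theorem exists_mem_inf_inv_mul_mem' (ψ : G) {u : G} (hij : i < j) (hj : j < n)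
    (hx : x ∈ Γlt ρ j) (hu : u ∈ Γgt n ρ i) (hs : u⁻¹ * x ∈ S.conj ψ) :
    ∃ μ ∈ Γgt n ρ i ⊓ Γlt ρ j, μ⁻¹ * x ∈ S.conj ψ := by
  obtain ⟨μ, hμ, hμs⟩ :=
    hS.exists_mem_inf_inv_mul_mem hΓ ψ hij hj hu hx (by simpa using inv_mem hs)
  exact ⟨μ, hμ, by simpa [mul_assoc] using mul_mem hμs hs⟩

variable (φ : G)

theorem exists_eq_mul_mul_conj_inf_Γgt {ψ : G}
    (hψ : ψ ∈ Subgroup.closure ((fun l => ρ (l + 1)) '' Iio (n - 1)))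
    (hik : i < k) (hkj : k < j) (hj : j < n - 1)
    (hx : x ∈ Γgt (n - 1) (fun l => ρ (l + 1)) i) (hβ : β ∈ Γlt (fun l => ρ (l + 1)) j)
    (hs : β⁻¹ * x ∈ (S.conj φ ⊓ Γgt n ρ 0).conj ψ) :
    ∃ α ∈ Γne (n - 1) (fun l => ρ (l + 1)) k,
      ∃ δ ∈ Γgt (n - 1) (fun l => ρ (l + 1)) i ⊓ Γlt (fun l => ρ (l + 1)) j,
        ∃ τ ∈ (S.conj φ ⊓ Γgt n ρ 0).conj ψ, x = α * δ * τ := by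
  rw [closure_image_succ_Iio] at hψ
  rw [Γgt_shift] at hx ⊢
  rw [Γlt_shift] at hβ ⊢
  rw [hΓ.Γne_shift, Subgroup.conj_inf_of_mem hψ, ← Subgroup.conj_mul]
  rw [Subgroup.conj_inf_of_mem hψ, ← Subgroup.conj_mul] at hs
  obtain ⟨α, hα, δ, hδ, τ, hτ, rfl⟩ := hS.exists_eq_mul_mul hΓ.closure_eq_top (φ * ψ)
    (k := k + 1) (j := j + 1) (by omega) (by omega) (by omega) hx (Γgt_le_Γlt hβ) hs.1
  obtain ⟨a, ha, b, hb, -, rfl⟩ :=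
    exists_mul_of_mem_Γne hΓ.sq_eq_one hΓ.mul_sq_eq_one (by omega) hα
  have hδi := (Subgroup.mem_inf.1 hδ).1
  have hδj : δ ∈ Γgt (j + 1) ρ (i + 1) := by rwa [hΓ.Γgt_inf_Γlt (by omega)] at hδ
  have hδ0 : δ ∈ Γgt n ρ 0 := Γgt_anti (Nat.zero_le _) hδi
  have hb0 : b ∈ Γgt n ρ 0 := Γgt_anti (Nat.zero_le _) hb
  have hw : b⁻¹ * (b * a * δ * τ) * δ⁻¹ ∈ Γgt n ρ 0 :=
    mul_mem (mul_mem (inv_mem hb0) (Γgt_anti (Nat.zero_le _) hx)) (inv_mem hδ0)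
  obtain ⟨μ, ⟨hμ0, hμk⟩, hμ⟩ := hS.exists_mem_inf_inv_mul_mem hΓ (φ * ψ * δ⁻¹)
    (j := k + 1) (Nat.succ_pos k) (by omega) hw ha (by
      rw [Subgroup.conj_mul, Subgroup.mem_conj, inv_inv]
      simpa only [show δ⁻¹ * (a⁻¹ * (b⁻¹ * (b * a * δ * τ) * δ⁻¹)) * δ = τ by group] using hτ)
  rw [Subgroup.conj_mul, Subgroup.mem_conj, inv_inv] at hμ
  refine ⟨b * μ, Subgroup.mem_inf.2 ⟨mul_mem hb0 hμ0,
      mul_mem (Γgt_le_Γne le_rfl hb) (Γlt_le_Γne le_rfl (by omega) hμk)⟩,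
    δ, Subgroup.mem_inf.2 ⟨hδi, Γgt_anti (Nat.zero_le _) hδj⟩,
    δ⁻¹ * (μ⁻¹ * (b⁻¹ * (b * a * δ * τ) * δ⁻¹)) * δ, Subgroup.mem_inf.2
      ⟨hμ, mul_mem (mul_mem (inv_mem hδ0) (mul_mem (inv_mem hμ0) hw)) hδ0⟩, by group⟩

theorem exists_eq_mul_mul_conj_inf_Γlt {ψ : G} (hψ : ψ ∈ Γlt ρ (n - 1))
    (hik : i < k) (hkj : k < j) (hj : j < n - 1) (hx : x ∈ Γgt (n - 1) ρ i)
    (hβ : β ∈ Γlt ρ j) (hs : β⁻¹ * x ∈ (S.conj φ ⊓ Γlt ρ (n - 1)).conj ψ) :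
    ∃ α ∈ Γne (n - 1) ρ k, ∃ δ ∈ Γgt (n - 1) ρ i ⊓ Γlt ρ j,
      ∃ τ ∈ (S.conj φ ⊓ Γlt ρ (n - 1)).conj ψ, x = α * δ * τ := by
  have hΓgt (i : ℕ) : Γgt (n - 1) ρ i = Γgt n ρ i ⊓ Γlt ρ (n - 1) :=
    (hΓ.Γgt_inf_Γlt (Nat.sub_le n 1)).symm
  rw [hΓgt, Subgroup.mem_inf] at hx
  rw [hΓgt, Subgroup.conj_inf_of_mem hψ, ← Subgroup.conj_mul]
  rw [Subgroup.conj_inf_of_mem hψ, ← Subgroup.conj_mul] at hs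
  obtain ⟨α, hα, δ, hδ, τ, hτ, rfl⟩ :=
    hS.exists_eq_mul_mul hΓ.closure_eq_top (φ * ψ) hik hkj (by omega) hx.1 hβ hs.1
  obtain ⟨a, ha, b, hb, rfl, -⟩ :=
    exists_mul_of_mem_Γne hΓ.sq_eq_one hΓ.mul_sq_eq_one (by omega) hα
  obtain ⟨hδi, hδj⟩ := Subgroup.mem_inf.1 hδ
  have hδn : δ ∈ Γlt ρ (n - 1) := Γlt_mono hj.le hδj
  have hw : a⁻¹ * (a * b * δ * τ) * δ⁻¹ ∈ Γlt ρ (n - 1) :=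
    mul_mem (mul_mem (inv_mem (Γlt_mono (by omega) ha)) hx.2) (inv_mem hδn)
  obtain ⟨μ, hμ', hμ⟩ := hS.exists_mem_inf_inv_mul_mem' hΓ (φ * ψ * δ⁻¹) (by omega) (by omega)
    hw hb (by
      rw [Subgroup.conj_mul, Subgroup.mem_conj, inv_inv]
      simpa only [show δ⁻¹ * (b⁻¹ * (a⁻¹ * (a * b * δ * τ) * δ⁻¹)) * δ = τ by group] using hτ)
  rw [Subgroup.conj_mul, Subgroup.mem_conj, inv_inv] at hμ
  refine ⟨a * μ, mul_mem (Γlt_le_Γne le_rfl (by omega) ha) (Γgt_le_Γne le_rfl (hΓgt k ▸ hμ')),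
    δ, Subgroup.mem_inf.2 ⟨Subgroup.mem_inf.2 ⟨hδi, hδn⟩, hδj⟩,
    δ⁻¹ * (μ⁻¹ * (a⁻¹ * (a * b * δ * τ) * δ⁻¹)) * δ, Subgroup.mem_inf.2
      ⟨hμ, mul_mem (mul_mem (inv_mem hδn) (mul_mem (inv_mem (Subgroup.mem_inf.1 hμ').2) hw))
        hδn⟩, by group⟩

theorem isSemisparse_conj_inf_Γgt :
    IsSemisparse (n - 1) (fun l => ρ (l + 1)) (S.conj φ ⊓ Γgt n ρ 0) := by
  refine isSemisparse_iff.2 ⟨fun ψ _ i hi w hw hmem => ?_,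
    fun ψ hψ i k j hik hkj hj x hx β hβ hs =>
      hS.exists_eq_mul_mul_conj_inf_Γgt hΓ φ hψ hik hkj hj hx hβ hs, fun i hi x hx β hβ hs => ?_⟩
  · rw [hΓ.Γne_shift] at hw
    refine hS.conj_mul_rho_notMem hΓ.closure_eq_top (t := i + 1) (by omega) hw.2 1 (φ * ψ) ?_
    simpa [Subgroup.conj_mul] using Subgroup.conj_mono inf_le_left hmem
  · rw [Γgt_shift] at hx
    rw [Γlt_shift] at hβ
    exact ⟨hS.isCutStable_conj hΓ φ (i + 1) (by omega) x hx β (Γgt_le_Γlt hβ) hs.1,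
      Γgt_anti (Nat.zero_le _) hx⟩

theorem isSemisparse_conj_inf_Γlt : IsSemisparse (n - 1) ρ (S.conj φ ⊓ Γlt ρ (n - 1)) := by
  refine isSemisparse_iff.2 ⟨fun ψ _ i hi w hw hmem => ?_,
    fun ψ hψ i k j hik hkj hj x hx β hβ hs =>
      hS.exists_eq_mul_mul_conj_inf_Γlt hΓ φ hψ hik hkj hj hx hβ hs, fun i hi x hx β hβ hs => ?_⟩
  · refine hS.conj_mul_rho_notMem hΓ.closure_eq_top (by omega) (Γne_mono (Nat.sub_le n 1) hw) 1
      (φ * ψ) ?_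
    simpa [Subgroup.conj_mul] using Subgroup.conj_mono inf_le_left hmem
  · rw [← hΓ.Γgt_inf_Γlt (Nat.sub_le n 1)] at hx
    exact ⟨hS.isCutStable_conj hΓ φ i (by omega) x hx.1 β hβ hs.1, hx.2⟩

theorem conj_inter_mul_eq :
    (S.conj φ : Set G) ∩ ((Γgt n ρ 0 : Set G) * (Γlt ρ (n - 1) : Set G)) =
      ((S.conj φ ⊓ Γgt n ρ 0 : Subgroup G) : Set G) * (S.conj φ ⊓ Γlt ρ (n - 1) : Subgroup G) := by
  refine Subset.antisymm ?_ ?_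
  · rintro _ ⟨hg, u, hu, v, hv, rfl⟩
    obtain ⟨μ, hμ', hμ⟩ : ∃ μ ∈ Γgt n ρ 0 ⊓ Γlt ρ (n - 1), μ⁻¹ * u⁻¹ ∈ S.conj φ := by
      rcases Nat.lt_or_ge 1 n with hn | hn
      · exact hS.exists_mem_inf_inv_mul_mem hΓ φ (by omega) (by omega) (inv_mem hu) hv
          (by simpa using inv_mem hg)
      · rw [SetLike.mem_coe, Γgt_eq_bot hn, Subgroup.mem_bot] at hu
        exact ⟨1, one_mem _, by simp [hu]⟩
    obtain ⟨hμu, hμv⟩ := Subgroup.mem_inf.1 hμ'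
    refine ⟨u * μ, Subgroup.mem_inf.2 ⟨by simpa using inv_mem hμ, mul_mem hu hμu⟩, μ⁻¹ * v,
      Subgroup.mem_inf.2 ⟨by simpa [mul_assoc] using mul_mem hμ hg, mul_mem (inv_mem hμv) hv⟩,
      by group⟩
  · rintro _ ⟨p, ⟨hpS, hp⟩, q, ⟨hqS, hq⟩, rfl⟩
    exact ⟨mul_mem hpS hqS, mul_mem_mul hp hq⟩

end IsSemisparse

end

/-- Let `Γ` be a string C-group with generating involutions
`ρ 0, …, ρ (n-1)`, and let `S` be a semisparse subgroup of `Γ`. Then for every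
`φ ∈ Γ`: (i) `φ⁻¹ S φ ∩ Γ_0` is semisparse in `Γ_0 = ⟨ρ 1, …, ρ (n-1)⟩`;
(ii) `φ⁻¹ S φ ∩ Γ_{n-1}` is semisparse in `Γ_{n-1} = ⟨ρ 0, …, ρ (n-2)⟩`; and
(iii) `φ⁻¹ S φ ∩ (Γ_0 Γ_{n-1}) = (φ⁻¹ S φ ∩ Γ_0)(φ⁻¹ S φ ∩ Γ_{n-1})` as sets. -/
theorem semisparse_inter_distinguished {G : Type*} [Group G] (n : ℕ) (ρ : ℕ → G)
    (hgen : Subgroup.closure (ρ '' Set.Iio n) = ⊤)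
    (hinv : ∀ i < n, ρ i ^ 2 = 1)
    (hcomm : ∀ i < n, ∀ j < n, (i + 2 ≤ j ∨ j + 2 ≤ i) → (ρ i * ρ j) ^ 2 = 1)
    (hint : ∀ I J : Set ℕ, I ⊆ Set.Iio n → J ⊆ Set.Iio n →
      Subgroup.closure (ρ '' I) ⊓ Subgroup.closure (ρ '' J) =
        Subgroup.closure (ρ '' (I ∩ J)))
    (S : Subgroup G) (hS : IsSemisparse n ρ S) (φ : G) :
    IsSemisparse (n - 1) (fun l => ρ (l + 1))
        (Subgroup.map (MulAut.conj φ⁻¹).toMonoidHom S ⊓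
          Subgroup.closure (ρ '' {l | l < n ∧ l ≠ 0})) ∧
    IsSemisparse (n - 1) ρ
        (Subgroup.map (MulAut.conj φ⁻¹).toMonoidHom S ⊓
          Subgroup.closure (ρ '' {l | l < n ∧ l ≠ n - 1})) ∧
    ((Subgroup.map (MulAut.conj φ⁻¹).toMonoidHom S : Set G) ∩
        ((Subgroup.closure (ρ '' {l | l < n ∧ l ≠ 0}) : Set G) *
          (Subgroup.closure (ρ '' {l | l < n ∧ l ≠ n - 1}) : Set G))) =
      ((Subgroup.map (MulAut.conj φ⁻¹).toMonoidHom S ⊓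
          Subgroup.closure (ρ '' {l | l < n ∧ l ≠ 0}) : Subgroup G) : Set G) *
        ((Subgroup.map (MulAut.conj φ⁻¹).toMonoidHom S ⊓
            Subgroup.closure (ρ '' {l | l < n ∧ l ≠ n - 1}) : Subgroup G) : Set G) := by
  have hΓ : IsStringCGroup n ρ := ⟨hgen, hinv, hcomm, hint⟩
  rw [show S.map (MulAut.conj φ⁻¹).toMonoidHom = S.conj φ from rfl,
    show Subgroup.closure (ρ '' {l | l < n ∧ l ≠ 0}) = Γgt n ρ 0 from Γne_zero,
    show Subgroup.closure (ρ '' {l | l < n ∧ l ≠ n - 1}) = Γlt ρ (n - 1) from Γne_sub_one]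
  exact ⟨hS.isSemisparse_conj_inf_Γgt hΓ φ, hS.isSemisparse_conj_inf_Γlt hΓ φ,
    hS.conj_inter_mul_eq hΓ φ⟩
end
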